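/- arXiv:2205.08991 — 6 statements merged into one kernel-verified Lean document; each statement's English description precedes it below -/
import Mathlib

section
/- Let A be a subalgebra of n×n complex matrices, M ∈ A with a simple eigenvalue λ, w a nonzero row vector with wM = λw, and U a proper nonzero A-submodule of ℂⁿ (column vectors) such that the eigenspace of M for λ is not contained in U. Then w lies in the orthogonal complement U⊥ = {w : ⟨w,u⟩ = 0 for all u ∈ U}, and consequently wA ≠ ℂⁿ (row vectors). -/
open Polynomial Matrix

theorem charpoly_sub_smul_one {n : ℕ} (M : Matrix (Fin n) (Fin n) ℂ) (lam : ℂ) :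
    (M - lam • 1).charpoly = (M.charpoly).comp (X + C lam) := by
  have h1 : (M - lam • 1).charmatrix = (M.charmatrix).map (aeval (X + C lam)).toRingHom := by
    ext i j
    by_cases h : i = j
    · subst h
      simp [charmatrix_apply_eq, Matrix.sub_apply, Matrix.smul_apply, Matrix.one_apply_eq]
      ring
    · simp [charmatrix_apply_ne _ _ _ h, Matrix.sub_apply, Matrix.smul_apply,
        Matrix.one_apply_ne h]
  rw [Matrix.charpoly, h1, ← RingHom.mapMatrix_apply, ← RingHom.map_det]
  rw [comp_eq_aeval]; rfl

theorem finrank_eig_le {n : ℕ} (M : Matrix (Fin n) (Fin n) ℂ) (lam : ℂ)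
    (hsimple : (Matrix.charpoly M).rootMultiplicity lam = 1) :
    Module.finrank ℂ (Module.End.eigenspace (Matrix.mulVecLin M) lam) ≤ 1 := by
  set ψ : Module.End ℂ (Fin n → ℂ) := Matrix.mulVecLin (M - lam • 1) with hψdef
  have hchar : ψ.charpoly = (M - lam • 1).charpoly := by
    rw [← LinearMap.charpoly_toMatrix ψ (Pi.basisFun ℂ (Fin n)),
      LinearMap.toMatrix_eq_toMatrix']
    congr 1
    rw [hψdef, ← Matrix.toLin'_apply', LinearMap.toMatrix'_toLin']
  have hle : Module.End.eigenspace (Matrix.mulVecLin M) lam ≤ ψ.maxGenEigenspace 0 := by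
    intro x hx
    rw [Module.End.mem_eigenspace_iff] at hx
    rw [Module.End.mem_maxGenEigenspace]
    refine ⟨1, ?_⟩
    simp only [hψdef, pow_one, zero_smul, sub_zero, Matrix.mulVecLin_apply, Matrix.sub_mulVec,
      Matrix.smul_mulVec, Matrix.one_mulVec, sub_eq_zero]
    rw [← Matrix.mulVecLin_apply, hx]
  calc Module.finrank ℂ (Module.End.eigenspace (Matrix.mulVecLin M) lam)
      ≤ Module.finrank ℂ (ψ.maxGenEigenspace 0) := Submodule.finrank_mono hle
    _ = (ψ.charpoly).natTrailingDegree := LinearMap.finrank_maxGenEigenspace_zero_eq ψ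
    _ = 1 := by
        rw [hchar, charpoly_sub_smul_one, ← Polynomial.rootMultiplicity_eq_natTrailingDegree,
          hsimple]



/-- If λ is a simple eigenvalue of M ∈ A, w a nonzero left (row) eigenvector,
and U a proper nonzero A-submodule of ℂⁿ not containing the eigenspace of M
for λ, then w ∈ U⊥ and consequently wA ≠ ℂⁿ. -/
theorem stmt2 (n : ℕ) (A : Subalgebra ℂ (Matrix (Fin n) (Fin n) ℂ))
    (M : Matrix (Fin n) (Fin n) ℂ) (hM : M ∈ A) (lam : ℂ)
    (hsimple : (Matrix.charpoly M).rootMultiplicity lam = 1)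
    (w : Fin n → ℂ) (hw : w ≠ 0) (hwM : Matrix.vecMul w M = lam • w)
    (U : Submodule ℂ (Fin n → ℂ))
    (hUinv : ∀ N ∈ A, ∀ u ∈ U, N.mulVec u ∈ U)
    (hUbot : U ≠ ⊥) (hUtop : U ≠ ⊤)
    (heig : ¬ Module.End.eigenspace (Matrix.mulVecLin M) lam ≤ U) :
    (∀ u ∈ U, ∑ i, w i * u i = 0) ∧
      ¬ (∀ u : Fin n → ℂ, ∃ N ∈ A, Matrix.vecMul w N = u) := by
  have hMA : M - lam • 1 ∈ A := sub_mem hM (A.smul_mem A.one_mem lam)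
  let T : U →ₗ[ℂ] U := (Matrix.mulVecLin (M - lam • 1)).restrict
    (fun x hx => by simpa [Matrix.sub_mulVec, Matrix.smul_mulVec] using hUinv _ hMA x hx)
  have hTinj : Function.Injective T := by
    rw [← LinearMap.ker_eq_bot, eq_bot_iff]
    intro x hx
    simp only [LinearMap.mem_ker] at hx
    have hx0 : Matrix.mulVecLin (M - lam • 1) (x : Fin n → ℂ) = 0 := by
      have := congrArg Subtype.val hx
      simpa [T, LinearMap.restrict_apply] using this
    have hxeig : (x : Fin n → ℂ) ∈ Module.End.eigenspace (Matrix.mulVecLin M) lam := by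
      rw [Module.End.mem_eigenspace_iff]
      have : M *ᵥ (x : Fin n → ℂ) - lam • (x : Fin n → ℂ) = 0 := by
        simpa [Matrix.mulVecLin_apply, Matrix.sub_mulVec, Matrix.smul_mulVec,
          Matrix.one_mulVec] using hx0
      rw [Matrix.mulVecLin_apply]
      linear_combination (norm := module) this
    by_contra hxne
    have hxv : (x : Fin n → ℂ) ≠ 0 := by
      simpa [Submodule.coe_eq_zero] using fun h => hxne (by simpa [Submodule.mem_bot] using h)
    apply heig
    have hspan : Submodule.span ℂ {(x : Fin n → ℂ)} ≤
        Module.End.eigenspace (Matrix.mulVecLin M) lam :=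
      Submodule.span_le.2 (by simpa using hxeig)
    have heq : Module.End.eigenspace (Matrix.mulVecLin M) lam =
        Submodule.span ℂ {(x : Fin n → ℂ)} := by
      refine (Submodule.eq_of_le_of_finrank_le hspan ?_).symm
      rw [finrank_span_singleton hxv]
      exact finrank_eig_le M lam hsimple
    rw [heq]
    exact Submodule.span_le.2 (by simpa using x.2)
  have hTsurj : Function.Surjective T := LinearMap.surjective_of_injective hTinj
  have hwzero : Matrix.vecMul w (M - lam • 1) = 0 := by
    have h1 : w ᵥ* (lam • (1 : Matrix (Fin n) (Fin n) ℂ)) = lam • w := by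
      ext j
      simp [Matrix.vecMul, dotProduct, Matrix.smul_apply, Matrix.one_apply,
        mul_comm, Finset.sum_ite_eq]
    simp [Matrix.vecMul_sub, hwM, h1]
  have part1 : ∀ u ∈ U, ∑ i, w i * u i = 0 := by
    intro u hu
    obtain ⟨v, hv⟩ := hTsurj ⟨u, hu⟩
    have hv' : (M - lam • 1) *ᵥ (v : Fin n → ℂ) = u := by
      have := congrArg Subtype.val hv
      simpa [T, LinearMap.restrict_apply, Matrix.mulVecLin_apply, Matrix.sub_mulVec, Matrix.smul_mulVec] using this
    calc ∑ i, w i * u i = w ⬝ᵥ u := rfl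
      _ = w ⬝ᵥ ((M - lam • 1) *ᵥ (v : Fin n → ℂ)) := by rw [hv']
      _ = Matrix.vecMul w (M - lam • 1) ⬝ᵥ (v : Fin n → ℂ) := Matrix.dotProduct_mulVec _ _ _
      _ = 0 := by rw [hwzero, zero_dotProduct]
  refine ⟨part1, fun hcontra => ?_⟩
  obtain ⟨u0, hu0U, hu0⟩ := Submodule.exists_mem_ne_zero_of_ne_bot hUbot
  obtain ⟨i, hi⟩ : ∃ i, u0 i ≠ 0 := by
    by_contra h
    push_neg at h
    exact hu0 (funext h)
  obtain ⟨N, hN, hNw⟩ := hcontra (Pi.single i 1)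
  have h2 := part1 _ (hUinv N hN u0 hu0U)
  have h3 : (∑ j, w j * (N *ᵥ u0) j) = u0 i := by
    calc (∑ j, w j * (N *ᵥ u0) j) = w ⬝ᵥ (N *ᵥ u0) := rfl
      _ = Matrix.vecMul w N ⬝ᵥ u0 := Matrix.dotProduct_mulVec _ _ _
      _ = Pi.single i 1 ⬝ᵥ u0 := by rw [hNw]
      _ = u0 i := by simp [dotProduct, Pi.single_apply]
  rw [h2] at h3
  exact hi h3.symm
end

section
/- Let A be a subalgebra of n×n complex matrices and suppose M ∈ A has all eigenspaces one-dimensional; let v₁, …, v_ℓ span the eigenspaces (one eigenvector per eigenvalue). Then ℂⁿ is a simple left A-module if and only if A vᵢ = ℂⁿ for every i = 1, …, ℓ. -/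
/-- If M ∈ A has all eigenspaces one-dimensional, spanned by v₁, …, v_ℓ (one
per eigenvalue), then ℂⁿ is a simple left A-module iff A vᵢ = ℂⁿ for all i. -/
theorem stmt4 (n ℓ : ℕ) (A : Subalgebra ℂ (Matrix (Fin n) (Fin n) ℂ))
    (M : Matrix (Fin n) (Fin n) ℂ) (hM : M ∈ A)
    (lams : Fin ℓ → ℂ) (hinj : Function.Injective lams)
    (vs : Fin ℓ → Fin n → ℂ) (hvs : ∀ i, vs i ≠ 0)
    (heig : ∀ i, Module.End.eigenspace (Matrix.mulVecLin M) (lams i)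
        = Submodule.span ℂ {vs i})
    (hall : ∀ μ : ℂ, Module.End.HasEigenvalue (Matrix.mulVecLin M) μ →
        ∃ i, μ = lams i) :
    (∀ U : Submodule ℂ (Fin n → ℂ),
        (∀ N ∈ A, ∀ u ∈ U, N.mulVec u ∈ U) → U = ⊥ ∨ U = ⊤) ↔
      (∀ i, ∀ u : Fin n → ℂ, ∃ N ∈ A, N.mulVec (vs i) = u) := by
  constructor
  · intro hsimp i u
    set U : Submodule ℂ (Fin n → ℂ) :=
      { carrier := {u | ∃ N ∈ A, N.mulVec (vs i) = u}
        add_mem' := by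
          rintro a b ⟨N, hN, rfl⟩ ⟨N', hN', rfl⟩
          exact ⟨N + N', A.add_mem hN hN', Matrix.add_mulVec _ _ _⟩
        zero_mem' := ⟨0, A.zero_mem, Matrix.zero_mulVec _⟩
        smul_mem' := by
          rintro c a ⟨N, hN, rfl⟩
          exact ⟨c • N, A.smul_mem hN c, Matrix.smul_mulVec _ _ _⟩ } with hUdef
    have hUinv : ∀ N ∈ A, ∀ x ∈ U, N.mulVec x ∈ U := by
      rintro N hN x ⟨N', hN', rfl⟩
      exact ⟨N * N', A.mul_mem hN hN', (Matrix.mulVec_mulVec _ _ _).symm⟩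
    have hvU : vs i ∈ U := ⟨1, A.one_mem, Matrix.one_mulVec _⟩
    rcases hsimp U hUinv with hbot | htop
    · exact absurd (hbot ▸ hvU) (by simpa using hvs i)
    · have : u ∈ U := htop ▸ Submodule.mem_top
      exact this
  · intro hsurj U hUinv
    by_cases hbot : U = ⊥
    · exact Or.inl hbot
    right
    have hnt : Nontrivial U := Submodule.nontrivial_iff_ne_bot.mpr hbot
    have hres : ∀ x ∈ U, (Matrix.mulVecLin M) x ∈ U := by
      intro x hx
      simpa using hUinv M hM x hx
    set f : Module.End ℂ U := (Matrix.mulVecLin M).restrict hres with hf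
    obtain ⟨c, hc⟩ := Module.End.exists_eigenvalue f
    obtain ⟨w, hw⟩ := hc.exists_hasEigenvector
    have hw0 : (w : Fin n → ℂ) ≠ 0 := by
      simpa [Submodule.coe_eq_zero] using hw.right
    have hmw : (Matrix.mulVecLin M) (w : Fin n → ℂ) = c • (w : Fin n → ℂ) := by
      have := congrArg (Subtype.val) hw.apply_eq_smul
      simpa [hf, LinearMap.restrict_apply] using this
    have hev : Module.End.HasEigenvalue (Matrix.mulVecLin M) c :=
      Module.End.hasEigenvalue_of_hasEigenvector
        ⟨Module.End.mem_eigenspace_iff.mpr hmw, hw0⟩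
    obtain ⟨i, rfl⟩ := hall c hev
    have hmem : (w : Fin n → ℂ) ∈ Submodule.span ℂ {vs i} := by
      rw [← heig i]
      exact Module.End.mem_eigenspace_iff.mpr hmw
    obtain ⟨a, ha⟩ := Submodule.mem_span_singleton.mp hmem
    have ha0 : a ≠ 0 := by
      rintro rfl
      simp at ha
      exact hw0 ha.symm
    have hvU : vs i ∈ U := by
      have : vs i = a⁻¹ • (w : Fin n → ℂ) := by
        rw [← ha, smul_smul, inv_mul_cancel₀ ha0, one_smul]
      rw [this]
      exact U.smul_mem _ w.2
    ext u
    simp only [Submodule.mem_top, iff_true]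
    obtain ⟨N, hN, hNu⟩ := hsurj i u
    exact hNu ▸ hUinv N hN (vs i) hvU
end

section
/- Let A be a unital subalgebra of the algebra of n×n complex matrices. The left A-module ℂⁿ has no submodule other than {0} and ℂⁿ if and only if A = Mat(n,ℂ). -/
open Module LinearMap

set_option linter.unusedSectionVars false

section Burnside

variable {V : Type*} [AddCommGroup V] [Module ℂ V] [FiniteDimensional ℂ V]

/-- transitivity: for a subalgebra with no nontrivial invariant subspaces -/
lemma burnside_trans (S : Subalgebra ℂ (Module.End ℂ V))
    (hs : ∀ U : Submodule ℂ V, (∀ f ∈ S, ∀ u ∈ U, f u ∈ U) → U = ⊥ ∨ U = ⊤)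
    {v : V} (hv : v ≠ 0) (t : V) : ∃ f ∈ S, f v = t := by
  set U : Submodule ℂ V := Submodule.map (LinearMap.applyₗ (R := ℂ) v) S.toSubmodule with hU
  have hmem : ∀ x, x ∈ U ↔ ∃ f ∈ S, f v = x := by
    intro x
    simp only [hU, Submodule.mem_map, Subalgebra.mem_toSubmodule]
    rfl
  have hinv : ∀ g ∈ S, ∀ u ∈ U, g u ∈ U := by
    intro g hg u hu
    obtain ⟨f, hf, rfl⟩ := (hmem u).1 hu
    exact (hmem _).2 ⟨g * f, mul_mem hg hf, rfl⟩
  rcases hs U hinv with hbot | htop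
  · exfalso
    have : v ∈ U := (hmem v).2 ⟨1, one_mem S, rfl⟩
    rw [hbot, Submodule.mem_bot] at this
    exact hv this
  · exact (hmem t).1 (htop ▸ Submodule.mem_top)

/-- dual transitivity -/
lemma burnside_dual_trans (S : Subalgebra ℂ (Module.End ℂ V))
    (hs : ∀ U : Submodule ℂ V, (∀ f ∈ S, ∀ u ∈ U, f u ∈ U) → U = ⊥ ∨ U = ⊤)
    {φ : Module.Dual ℂ V} (hφ : φ ≠ 0) (ψ : Module.Dual ℂ V) :
    ∃ f ∈ S, φ ∘ₗ f = ψ := by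
  set F : Submodule ℂ (Module.Dual ℂ V) :=
    Submodule.map (LinearMap.llcomp ℂ V V ℂ φ) S.toSubmodule with hF
  have hmemF : ∀ χ, χ ∈ F ↔ ∃ f ∈ S, φ ∘ₗ f = χ := by
    intro χ
    simp only [hF, Submodule.mem_map, Subalgebra.mem_toSubmodule]
    rfl
  -- the common kernel of F is invariant
  set Z := F.dualCoannihilator with hZ
  have hmemZ : ∀ x, x ∈ Z ↔ ∀ f ∈ S, φ (f x) = 0 := by
    intro x
    rw [hZ, Submodule.mem_dualCoannihilator]
    constructor
    · intro h f hf
      exact h _ ((hmemF _).2 ⟨f, hf, rfl⟩)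
    · intro h χ hχ
      obtain ⟨f, hf, rfl⟩ := (hmemF χ).1 hχ
      exact h f hf
  have hinv : ∀ g ∈ S, ∀ u ∈ Z, g u ∈ Z := by
    intro g hg u hu
    rw [hmemZ] at hu ⊢
    intro f hf
    exact hu (f * g) (mul_mem hf hg)
  have hZbot : Z = ⊥ := by
    rcases hs Z hinv with h | h
    · exact h
    · exfalso
      obtain ⟨x, hx⟩ := DFunLike.ne_iff.1 hφ
      have : x ∈ Z := h ▸ Submodule.mem_top
      have := (hmemZ x).1 this 1 (one_mem S)
      exact hx (by simpa using this)
  have hFtop : F = ⊤ := by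
    have h1 := Subspace.finrank_add_finrank_dualCoannihilator_eq F
    rw [← hZ, hZbot, finrank_bot] at h1
    have h2 : finrank ℂ (Module.Dual ℂ V) = finrank ℂ V := Subspace.dual_finrank_eq
    apply Submodule.eq_top_of_finrank_eq
    omega
  exact (hmemF ψ).1 (hFtop ▸ Submodule.mem_top)

/-- rank-one operators belong to S -/
lemma burnside_rank_one [Nontrivial V] (S : Subalgebra ℂ (Module.End ℂ V))
    (hs : ∀ U : Submodule ℂ V, (∀ f ∈ S, ∀ u ∈ U, f u ∈ U) → U = ⊥ ∨ U = ⊤)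
    (ψ : Module.Dual ℂ V) (a : V) : ψ.smulRight a ∈ S := by
  classical
  -- find an element of minimal positive rank
  set P : ℕ → Prop := fun r => ∃ f ∈ S, f ≠ 0 ∧ finrank ℂ (LinearMap.range f) = r with hPdef
  have hPex : ∃ r, P r := ⟨_, 1, one_mem S, one_ne_zero, rfl⟩
  set r := Nat.find hPex with hr
  obtain ⟨f, hfS, hf0, hfr⟩ : P r := Nat.find_spec hPex
  have hrpos : 0 < r := by
    rcases Nat.eq_zero_or_pos r with h | h
    · exfalso
      rw [h] at hfr
      rw [Submodule.finrank_eq_zero] at hfr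
      exact hf0 (LinearMap.range_eq_bot.1 hfr)
    · exact h
  -- show r = 1
  have hr1 : r = 1 := by
    by_contra hne
    have hr2 : 2 ≤ r := by omega
    obtain ⟨u1, hu1⟩ := DFunLike.ne_iff.1 hf0
    simp only [LinearMap.zero_apply] at hu1
    -- find u2 with f u2 ∉ span {f u1}
    have hnotle : ¬ (LinearMap.range f ≤ Submodule.span ℂ {f u1}) := by
      intro hle
      have := Submodule.finrank_mono hle
      have h1 : finrank ℂ (Submodule.span ℂ {f u1}) = 1 :=
        finrank_span_singleton hu1
      omega
    obtain ⟨y, hy, hy2⟩ := SetLike.not_le_iff_exists.1 hnotle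
    obtain ⟨u2, rfl⟩ := hy
    -- g sends f u1 to u2
    obtain ⟨g, hgS, hg⟩ := burnside_trans S hs hu1 u2
    -- restrict f * g to range f, get eigenvalue
    set W := LinearMap.range f with hW
    have hWinv : ∀ x ∈ W, (f * g) x ∈ W := fun x _ => ⟨g x, rfl⟩
    have : Nontrivial W := Submodule.nontrivial_iff_ne_bot.2 (by
      simp only [hW, ne_eq, LinearMap.range_eq_bot]
      exact hf0)
    set e : Module.End ℂ W := (f * g).restrict hWinv with he
    obtain ⟨μ, hμ⟩ := Module.End.exists_eigenvalue e
    obtain ⟨z, hz⟩ := hμ.exists_hasEigenvector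
    have hz0 : (z : V) ≠ 0 := fun h => hz.right (Subtype.ext h)
    have hez : (f * g) (z : V) = μ • (z : V) := by
      have h1 := hz.apply_eq_smul
      have h2 := congrArg Subtype.val h1
      simpa [he, LinearMap.restrict_apply] using h2
    set m : Module.End ℂ V := f * g - algebraMap ℂ (Module.End ℂ V) μ with hm
    have hmz : m (z : V) = 0 := by
      simp [hm, hez, Module.algebraMap_end_apply]
    set k : Module.End ℂ V := m * f with hk
    have hkS : k ∈ S := mul_mem
      (sub_mem (mul_mem hfS hgS) (Subalgebra.algebraMap_mem S μ)) hfS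
    have hk0 : k ≠ 0 := by
      intro h
      have hzero : k u1 = 0 := by rw [h]; rfl
      have hku1 : f u2 - μ • f u1 = 0 := by
        simpa [hk, hm, hg, Module.algebraMap_end_apply] using hzero
      apply hy2
      rw [Submodule.mem_span_singleton]
      exact ⟨μ, (sub_eq_zero.1 hku1).symm⟩
    -- rank of k is smaller than r
    set m' : W →ₗ[ℂ] V := m ∘ₗ W.subtype with hm'
    have hrange : LinearMap.range k = LinearMap.range m' := by
      rw [hk, hm', Module.End.mul_eq_comp, LinearMap.range_comp, LinearMap.range_comp,
        Submodule.range_subtype]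
    have hker : finrank ℂ (LinearMap.ker m') ≠ 0 := by
      rw [ne_eq, Submodule.finrank_eq_zero]
      intro h
      have hzk : (⟨(z : V), z.2⟩ : W) ∈ LinearMap.ker m' := by
        simp [hm', LinearMap.mem_ker, hmz]
      rw [h, Submodule.mem_bot] at hzk
      exact hz0 (congrArg Subtype.val hzk)
    have hsum := LinearMap.finrank_range_add_finrank_ker m'
    have hWr : finrank ℂ W = r := hfr
    have hlt : finrank ℂ (LinearMap.range k) < r := by
      rw [hrange]
      omega
    exact Nat.find_min hPex hlt ⟨k, hkS, hk0, rfl⟩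
  -- f has rank one: extract v and φ
  obtain ⟨u, hu⟩ := DFunLike.ne_iff.1 hf0
  simp only [LinearMap.zero_apply] at hu
  set v := f u with hv
  have hv0 : v ≠ 0 := hu
  have hspan : LinearMap.range f = Submodule.span ℂ {v} := by
    apply (Submodule.eq_of_le_of_finrank_le (Submodule.span_le.2 (by
      rintro x rfl; exact ⟨u, rfl⟩)) _).symm
    rw [hfr, hr1, finrank_span_singleton hv0]
  -- functional ψ₀ with ψ₀ v = 1
  obtain ⟨χ, hχ⟩ : ∃ χ : Module.Dual ℂ V, χ v ≠ 0 := by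
    by_contra h
    push_neg at h
    exact hv0 ((Module.forall_dual_apply_eq_zero_iff ℂ v).1 h)
  set ψ₀ : Module.Dual ℂ V := (χ v)⁻¹ • χ with hψ₀
  have hψ₀v : ψ₀ v = 1 := by simp [hψ₀, inv_mul_cancel₀ hχ]
  set φ : Module.Dual ℂ V := ψ₀ ∘ₗ f with hφdef
  have hfeq : ∀ x, f x = φ x • v := by
    intro x
    have hmem : f x ∈ Submodule.span ℂ {v} := hspan ▸ LinearMap.mem_range_self f x
    obtain ⟨c, hc⟩ := Submodule.mem_span_singleton.1 hmem
    rw [← hc]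
    have : φ x = c := by
      rw [hφdef]
      simp only [LinearMap.coe_comp, Function.comp_apply, ← hc]
      rw [map_smul, hψ₀v, smul_eq_mul, mul_one]
    rw [this]
  have hφ0 : φ ≠ 0 := by
    intro h
    have hh := hfeq u
    rw [h] at hh
    simp only [LinearMap.zero_apply, zero_smul] at hh
    exact hu hh
  -- combine
  obtain ⟨p, hpS, hp⟩ := burnside_trans S hs hv0 a
  obtain ⟨q, hqS, hq⟩ := burnside_dual_trans S hs hφ0 ψ
  have heq : p * f * q = ψ.smulRight a := by
    ext x
    have hq' : φ (q x) = ψ x := by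
      have := congrArg (fun (χ : Module.Dual ℂ V) => χ x) hq
      simpa using this
    simp only [Module.End.mul_apply, LinearMap.smulRight_apply]
    rw [hfeq (q x), map_smul, hq', hp]
  exact heq ▸ mul_mem (mul_mem hpS hfS) hqS

lemma burnside_end [Nontrivial V] (S : Subalgebra ℂ (Module.End ℂ V))
    (hs : ∀ U : Submodule ℂ V, (∀ f ∈ S, ∀ u ∈ U, f u ∈ U) → U = ⊥ ∨ U = ⊤) :
    S = ⊤ := by
  rw [Algebra.eq_top_iff]
  intro h
  classical
  set b := Module.finBasis ℂ V with hb
  have hrepr : h = ∑ i, (b.coord i).smulRight (h (b i)) := by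
    apply b.ext
    intro i
    simp only [LinearMap.sum_apply, LinearMap.smulRight_apply, Basis.coord_apply,
      Basis.repr_self, Finsupp.single_apply, ite_smul, one_smul, zero_smul,
      Finset.sum_ite_eq, Finset.mem_univ, if_true]
  rw [hrepr]
  exact Subalgebra.sum_mem S fun i _ => burnside_rank_one S hs _ _

end Burnside

/-- (Burnside) The left A-module ℂⁿ has no submodule other than {0} and ℂⁿ
iff the unital subalgebra A is the full matrix algebra. -/
theorem stmt13 (n : ℕ) (A : Subalgebra ℂ (Matrix (Fin n) (Fin n) ℂ)) :
    (∀ U : Submodule ℂ (Fin n → ℂ),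
        (∀ M ∈ A, ∀ u ∈ U, M.mulVec u ∈ U) → U = ⊥ ∨ U = ⊤) ↔ A = ⊤ := by
  constructor
  · intro hs
    rcases Nat.eq_zero_or_pos n with rfl | hn
    · -- trivial case: matrices are a subsingleton
      ext x
      simp only [Algebra.mem_top, iff_true]
      have : x = 1 := Subsingleton.elim x 1
      rw [this]; exact one_mem A
    · have : Nontrivial (Fin n → ℂ) := by
        have : NeZero n := ⟨by omega⟩
        infer_instance
      set S : Subalgebra ℂ (Module.End ℂ (Fin n → ℂ)) :=
        A.map (Matrix.toLinAlgEquiv' : Matrix (Fin n) (Fin n) ℂ ≃ₐ[ℂ]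
          ((Fin n → ℂ) →ₗ[ℂ] (Fin n → ℂ))).toAlgHom with hS
      have hST : S = ⊤ := by
        apply burnside_end
        intro U hU
        apply hs U
        intro M hM u hu
        have hMS : Matrix.toLinAlgEquiv' M ∈ S := ⟨M, hM, rfl⟩
        have h2 := hU _ hMS u hu
        simpa [Matrix.toLinAlgEquiv'_apply] using h2
      -- pull back
      ext M
      simp only [Algebra.mem_top, iff_true]
      have hMS : Matrix.toLinAlgEquiv' M ∈ S := hST ▸ Algebra.mem_top
      obtain ⟨N, hN, hNe⟩ := hMS
      have : N = M := (Matrix.toLinAlgEquiv' (R := ℂ) (n := Fin n)).injective hNe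
      exact this ▸ hN
  · rintro rfl U hU
    rcases eq_or_ne U ⊥ with h | h
    · exact Or.inl h
    · right
      obtain ⟨u, huU, hu0⟩ := Submodule.exists_mem_ne_zero_of_ne_bot h
      obtain ⟨i, hi⟩ : ∃ i, u i ≠ 0 := by
        by_contra hc
        push_neg at hc
        exact hu0 (funext hc)
      rw [Submodule.eq_top_iff']
      intro t
      set M : Matrix (Fin n) (Fin n) ℂ := Matrix.of (fun j k => if k = i then t j / u i else 0)
        with hM
      have hMu : M.mulVec u = t := by
        funext j
        simp [hM, Matrix.mulVec, dotProduct, Finset.sum_ite_eq',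
          div_mul_cancel₀ _ hi]
      exact hMu ▸ hU M Algebra.mem_top u huU
end

section
/- Let M ∈ Mat(n,ℂ), let λ₁, …, λ_ℓ be its distinct eigenvalues with generalized eigenspaces E₁, …, E_ℓ, and let P₁ be the projection onto E₁ along E₂ ⊕ ⋯ ⊕ E_ℓ. Let N ∈ Mat(n,ℂ) be another matrix, μ an eigenvalue of P₁NP₁, and Q the projection onto the generalized eigenspace of P₁NP₁ for μ along the sum of its other generalized eigenspaces. If μ ≠ 0, then QP₁ is the projection onto E₁ ∩ E_μ along (E₁ ∩ G) ⊕ (E₂ ⊕ ⋯ ⊕ E_ℓ), where E_μ is the generalized eigenspace of P₁NP₁ for μ and G the sum of its other generalized eigenspaces; in particular (QP₁)² = QP₁. -/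
/-- Generalized eigenspace of an n×n matrix for an eigenvalue λ. -/
noncomputable def genE (n : ℕ) (M : Matrix (Fin n) (Fin n) ℂ) (lam : ℂ) :
    Submodule ℂ (Fin n → ℂ) :=
  LinearMap.ker (Matrix.mulVecLin ((M - lam • (1 : Matrix (Fin n) (Fin n) ℂ)) ^ n))

/-- Sum of the generalized eigenspaces of M for values other than λ. -/
noncomputable def genF (n : ℕ) (M : Matrix (Fin n) (Fin n) ℂ) (lam : ℂ) :
    Submodule ℂ (Fin n → ℂ) :=
  ⨆ μ ≠ lam, genE n M μ

lemma mulVecLin_eq_toLinAlgEquiv' {n : ℕ} (A : Matrix (Fin n) (Fin n) ℂ) :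
    A.mulVecLin = Matrix.toLinAlgEquiv' A := rfl

lemma mulVecLin_sub_smul_pow {n : ℕ} (A : Matrix (Fin n) (Fin n) ℂ) (lam : ℂ) (k : ℕ) :
    Matrix.mulVecLin ((A - lam • (1 : Matrix (Fin n) (Fin n) ℂ)) ^ k)
      = (Matrix.mulVecLin A - lam • 1) ^ k := by
  simp only [mulVecLin_eq_toLinAlgEquiv', map_pow, map_sub, map_smul, map_one]

lemma genE_eq_max {n : ℕ} (A : Matrix (Fin n) (Fin n) ℂ) (lam : ℂ) :
    genE n A lam = Module.End.maxGenEigenspace (Matrix.mulVecLin A) lam := by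
  rw [genE]
  rw [show Module.End.maxGenEigenspace (Matrix.mulVecLin A) lam =
      Module.End.genEigenspace (Matrix.mulVecLin A) lam (Module.finrank ℂ (Fin n → ℂ)) from
    Module.End.maxGenEigenspace_eq_genEigenspace_finrank _ _]
  have hfr : Module.finrank ℂ (Fin n → ℂ) = n := by simp
  rw [hfr, Module.End.genEigenspace_nat, mulVecLin_sub_smul_pow]

lemma genE_sup_genF {n : ℕ} (A : Matrix (Fin n) (Fin n) ℂ) (lam : ℂ) :
    genE n A lam ⊔ genF n A lam = ⊤ := by
  rw [eq_top_iff, ← Module.End.iSup_maxGenEigenspace_eq_top (Matrix.mulVecLin A)]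
  apply iSup_le
  intro ν
  by_cases h : ν = lam
  · subst h
    exact le_sup_of_le_left (genE_eq_max A ν).ge
  · refine le_sup_of_le_right ?_
    rw [← genE_eq_max]
    exact le_iSup₂ (f := fun ν _ => genE n A ν) ν h

lemma mem_range_of_pow_sub {n : ℕ} (hn : 0 < n) (T : Module.End ℂ (Fin n → ℂ)) {μ : ℂ}
    (hμ : μ ≠ 0) {a : Fin n → ℂ} (ha : ((T - μ • 1) ^ n) a = 0) : ∃ b, T b = a := by
  set p : Polynomial ℂ := (Polynomial.X - Polynomial.C μ) ^ n with hp
  have hpa : Polynomial.aeval T p a = 0 := by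
    have : Polynomial.aeval T p = (T - μ • 1) ^ n := by
      simp [hp, map_pow, map_sub, Algebra.algebraMap_eq_smul_one]
    rw [this, ha]
  have hc0 : p.coeff 0 = (-μ) ^ n := by
    rw [Polynomial.coeff_zero_eq_eval_zero]
    simp [hp]
  have hsplit : p = Polynomial.X * p.divX + Polynomial.C (p.coeff 0) :=
    (Polynomial.X_mul_divX_add p).symm
  have key : T (Polynomial.aeval T p.divX a) + ((-μ) ^ n) • a = 0 := by
    have := congrArg (fun q => Polynomial.aeval T q a) hsplit
    simp only [map_add, map_mul, Polynomial.aeval_X, Polynomial.aeval_C,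
      Algebra.algebraMap_eq_smul_one, LinearMap.add_apply, Module.End.mul_apply,
      LinearMap.smul_apply, Module.End.one_apply] at this
    rw [hc0] at this
    rw [← this]
    exact hpa
  have hne : ((-μ) ^ n) ≠ 0 := pow_ne_zero _ (neg_ne_zero.mpr hμ)
  refine ⟨-(((-μ) ^ n)⁻¹ • Polynomial.aeval T p.divX a), ?_⟩
  rw [map_neg, map_smul]
  have : T (Polynomial.aeval T p.divX a) = -(((-μ) ^ n) • a) := by
    rw [eq_neg_iff_add_eq_zero]; exact key
  rw [this]
  rw [smul_neg, neg_neg, smul_smul, inv_mul_cancel₀ hne, one_smul]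

/-- Let P₁ be the projection onto the generalized eigenspace E₁ of M for λ₁
along the sum of the others, μ ≠ 0 an eigenvalue of P₁NP₁, and Q the
projection onto the generalized eigenspace E_μ of P₁NP₁ for μ along the sum
G of its other generalized eigenspaces.  Then QP₁ is the projection onto
E₁ ∩ E_μ along (E₁ ∩ G) ⊕ (sum of the other gen. eigenspaces of M); in
particular (QP₁)² = QP₁. -/
theorem stmt15 (n : ℕ) (M N P₁ Q : Matrix (Fin n) (Fin n) ℂ) (lam₁ μ : ℂ)
    (hlam : Module.End.HasEigenvalue (Matrix.mulVecLin M) lam₁)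
    (hP1 : ∀ x ∈ genE n M lam₁, P₁.mulVec x = x)
    (hP2 : ∀ x ∈ genF n M lam₁, P₁.mulVec x = 0)
    (hμeig : Module.End.HasEigenvalue (Matrix.mulVecLin (P₁ * N * P₁)) μ)
    (hμ : μ ≠ 0)
    (hQ1 : ∀ x ∈ genE n (P₁ * N * P₁) μ, Q.mulVec x = x)
    (hQ2 : ∀ x ∈ genF n (P₁ * N * P₁) μ, Q.mulVec x = 0) :
    (∀ x ∈ genE n M lam₁ ⊓ genE n (P₁ * N * P₁) μ, (Q * P₁).mulVec x = x) ∧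
    (∀ x ∈ (genE n M lam₁ ⊓ genF n (P₁ * N * P₁) μ) ⊔ genF n M lam₁,
        (Q * P₁).mulVec x = 0) ∧
    (Q * P₁) * (Q * P₁) = Q * P₁ := by
  rcases Nat.eq_zero_or_pos n with hn | hn
  · subst hn
    exact ⟨fun x _ => Subsingleton.elim _ _, fun x _ => Subsingleton.elim _ _,
      Subsingleton.elim _ _⟩
  -- basic facts about P₁
  have hE1F1 := genE_sup_genF M lam₁
  have hP1range : ∀ v : Fin n → ℂ, P₁.mulVec v ∈ genE n M lam₁ := by
    intro v
    obtain ⟨e, he, f, hf, hef⟩ := Submodule.mem_sup.mp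
      (hE1F1 ▸ (Submodule.mem_top : v ∈ (⊤ : Submodule ℂ (Fin n → ℂ))))
    rw [← hef, Matrix.mulVec_add, hP1 e he, hP2 f hf, add_zero]
    exact he
  have hP1idem : ∀ v : Fin n → ℂ, P₁.mulVec (P₁.mulVec v) = P₁.mulVec v :=
    fun v => hP1 _ (hP1range v)
  -- every generalized eigenvector of P₁NP₁ for μ is fixed by P₁
  have hEμP : ∀ a ∈ genE n (P₁ * N * P₁) μ, P₁.mulVec a = a := by
    intro a ha
    have ha' : ((Matrix.mulVecLin (P₁ * N * P₁) - μ • 1) ^ n) a = 0 := by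
      rw [← mulVecLin_sub_smul_pow]
      exact ha
    obtain ⟨b, hb⟩ := mem_range_of_pow_sub hn _ hμ ha'
    have hb' : P₁.mulVec ((N * P₁).mulVec b) = a := by
      rw [Matrix.mulVec_mulVec, ← Matrix.mul_assoc]
      exact hb
    rw [← hb', hP1idem]
  refine ⟨?_, ?_, ?_⟩
  · -- identity on E₁ ⊓ E_μ
    intro x hx
    rw [← Matrix.mulVec_mulVec, hP1 x hx.1, hQ1 x hx.2]
  · -- zero on (E₁ ⊓ G) ⊔ F₁
    intro x hx
    have : (genE n M lam₁ ⊓ genF n (P₁ * N * P₁) μ) ⊔ genF n M lam₁ ≤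
        LinearMap.ker (Matrix.mulVecLin (Q * P₁)) := by
      apply sup_le
      · intro y hy
        rw [LinearMap.mem_ker, Matrix.mulVecLin_apply, ← Matrix.mulVec_mulVec,
          hP1 y hy.1, hQ2 y hy.2]
      · intro y hy
        rw [LinearMap.mem_ker, Matrix.mulVecLin_apply, ← Matrix.mulVec_mulVec,
          hP2 y hy, Matrix.mulVec_zero]
    simpa [Matrix.mulVecLin_apply] using this hx
  · -- idempotent
    apply Matrix.toLin'.injective
    apply LinearMap.ext
    intro v
    simp only [Matrix.toLin'_apply, ← Matrix.mulVec_mulVec]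
    obtain ⟨a, ha, g, hg, hag⟩ := Submodule.mem_sup.mp
      ((genE_sup_genF (P₁ * N * P₁) μ) ▸
        (Submodule.mem_top : P₁.mulVec v ∈ (⊤ : Submodule ℂ (Fin n → ℂ))))
    have hQPv : Q.mulVec (P₁.mulVec v) = a := by
      rw [← hag, Matrix.mulVec_add, hQ1 a ha, hQ2 g hg, add_zero]
    rw [hQPv, hEμP a ha, hQ1 a ha]
end

section
/- Let M ∈ Mat(n,ℂ) with distinct eigenvalues λ₁, …, λ_ℓ, and let R ∈ Mat(n,ℂ) be a nonzero projection (R² = R) that commutes with M and whose range is a proper nonzero subspace of the generalized eigenspace of M for λ₁. Then for any α ∈ ℂ such that λ₁ + α ∉ {λ₁, …, λ_ℓ}, the matrix M + αR has at least ℓ + 1 distinct eigenvalues. -/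
open Matrix Polynomial

lemma mulVecLin_pow {n : ℕ} (A : Matrix (Fin n) (Fin n) ℂ) (k : ℕ) :
    (A ^ k).mulVecLin = A.mulVecLin ^ k := by
  induction k with
  | zero => simp only [pow_zero, Matrix.mulVecLin_one]; rfl
  | succ k ih => rw [pow_succ, pow_succ, Matrix.mulVecLin_mul, ih]; rfl

/-- eigenvector gives root of charpoly -/
lemma isRoot_charpoly_of_eigen {n : ℕ} (A : Matrix (Fin n) (Fin n) ℂ) (μ : ℂ)
    (v : Fin n → ℂ) (hv : v ≠ 0) (h : A.mulVec v = μ • v) :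
    (Matrix.charpoly A).IsRoot μ := by
  have hdet : (μ • (1 : Matrix (Fin n) (Fin n) ℂ) - A).det = 0 := by
    rw [← Matrix.exists_mulVec_eq_zero_iff]
    refine ⟨v, hv, ?_⟩
    rw [Matrix.sub_mulVec, Matrix.smul_mulVec, Matrix.one_mulVec, h, sub_self]
  have := _root_.eval_det (Matrix.charmatrix A) μ
  rw [Matrix.charpoly, Polynomial.IsRoot, this, Matrix.matPolyEquiv_charmatrix]
  simp only [Polynomial.eval_sub, Polynomial.eval_X, Polynomial.eval_C]
  convert hdet using 3
  simp [Matrix.smul_one_eq_diagonal]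

/-- nilpotent nonzero invariant subspace has a kernel vector -/
lemma exists_ker_vec {n : ℕ} (N : Matrix (Fin n) (Fin n) ℂ)
    (W : Submodule ℂ (Fin n → ℂ)) (hW : W ≠ ⊥)
    (hinv : ∀ x ∈ W, N.mulVec x ∈ W)
    (hnil : ∀ x ∈ W, (N ^ n).mulVec x = 0) :
    ∃ v ∈ W, v ≠ 0 ∧ N.mulVec v = 0 := by
  obtain ⟨w, hwW, hw0⟩ := Submodule.exists_mem_ne_zero_of_ne_bot hW
  -- iterate
  have hmem : ∀ k, (N ^ k).mulVec w ∈ W := by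
    intro k
    induction k with
    | zero => simpa using hwW
    | succ k ih =>
        rw [pow_succ']
        rw [← Matrix.mulVec_mulVec]
        exact hinv _ ih
  have hend : (N ^ n).mulVec w = 0 := hnil w hwW
  -- minimal k with (N^k) w = 0
  have hex : ∃ k, (N ^ k).mulVec w = 0 := ⟨n, hend⟩
  classical
  have hk0 : Nat.find hex ≠ 0 := by
    intro h
    have h2 := Nat.find_spec hex
    rw [h] at h2
    simp at h2
    exact hw0 h2
  obtain ⟨m, hm⟩ := Nat.exists_eq_succ_of_ne_zero hk0
  refine ⟨(N ^ m).mulVec w, hmem m, ?_, ?_⟩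
  · exact Nat.find_min hex (by omega)
  · have h2 := Nat.find_spec hex
    rw [hm, pow_succ'] at h2
    rw [Matrix.mulVec_mulVec]
    exact h2

/-- Let M have exactly the distinct eigenvalues in the finite set s, let
λ₁ ∈ s, and let R be a nonzero projection commuting with M whose range is a
proper nonzero subspace of the generalized eigenspace of M for λ₁.  Then for
α with λ₁ + α ∉ s, the matrix M + αR has at least s.card + 1 distinct
eigenvalues. -/
theorem stmt16 (n : ℕ) (M R : Matrix (Fin n) (Fin n) ℂ) (s : Finset ℂ)
    (hs : ∀ μ : ℂ, Module.End.HasEigenvalue (Matrix.mulVecLin M) μ ↔ μ ∈ s)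
    (lam₁ : ℂ) (hlam₁ : lam₁ ∈ s)
    (hR0 : R ≠ 0) (hidem : R * R = R) (hcomm : M * R = R * M)
    (hrange : LinearMap.range (Matrix.mulVecLin R) < genE n M lam₁)
    (α : ℂ) (hα : lam₁ + α ∉ s) :
    s.card + 1 ≤ (Matrix.charpoly (M + α • R)).roots.toFinset.card := by
  classical
  set N : Matrix (Fin n) (Fin n) ℂ := M - lam₁ • 1 with hN
  -- commutation facts
  have hNR : N * R = R * N := by
    simp only [hN, sub_mul, mul_sub, hcomm, smul_mul_assoc, one_mul, mul_smul_comm, mul_one]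
  have hNkR : ∀ k, N ^ k * R = R * N ^ k := by
    intro k
    induction k with
    | zero => simp
    | succ k ih => rw [pow_succ, mul_assoc, hNR, ← mul_assoc, ih, mul_assoc]
  have hNnR : N ^ n * R = R * N ^ n := hNkR n
  have hNkN : ∀ k, N ^ k * N = N * N ^ k := fun k => (Commute.refl N).pow_left k
  -- membership in genE
  have hgen : ∀ x, x ∈ genE n M lam₁ ↔ (N ^ n).mulVec x = 0 := by
    intro x
    rw [genE, LinearMap.mem_ker, Matrix.mulVecLin_apply]
  -- eigenvector scaling under powers
  have hpow_smul : ∀ (v : Fin n → ℂ) (c : ℂ), N.mulVec v = c • v →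
      ∀ k, (N ^ k).mulVec v = c ^ k • v := by
    intro v c hv k
    induction k with
    | zero => simp
    | succ k ih =>
        rw [pow_succ, ← Matrix.mulVec_mulVec, hv, Matrix.mulVec_smul, ih,
          smul_smul, ← pow_succ']
  have hNv : ∀ (v : Fin n → ℂ) (μ : ℂ), M.mulVec v = μ • v →
      N.mulVec v = (μ - lam₁) • v := by
    intro v μ hv
    rw [hN, Matrix.sub_mulVec, hv, Matrix.smul_mulVec, Matrix.one_mulVec, sub_smul]
  -- Step 1: every μ ∈ s is a root of charpoly (M + α • R)
  have hroot1 : ∀ μ ∈ s, (Matrix.charpoly (M + α • R)).IsRoot μ := by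
    intro μ hμ
    by_cases hμl : μ = lam₁
    · -- use K = ker R ⊓ genE
      rw [hμl]
      set K : Submodule ℂ (Fin n → ℂ) := LinearMap.ker R.mulVecLin ⊓ genE n M lam₁ with hK
      have hKbot : K ≠ ⊥ := by
        intro hbot
        apply hrange.ne
        refine le_antisymm hrange.le ?_
        intro x hx
        have h1 : x - R.mulVec x ∈ K := by
          refine Submodule.mem_inf.mpr ⟨?_, ?_⟩
          · rw [LinearMap.mem_ker, Matrix.mulVecLin_apply, Matrix.mulVec_sub,
              Matrix.mulVec_mulVec, hidem, sub_self]
          · rw [hgen] at hx ⊢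
            rw [Matrix.mulVec_sub, hx, Matrix.mulVec_mulVec, hNnR,
              ← Matrix.mulVec_mulVec, hx, Matrix.mulVec_zero, sub_self]
        rw [hbot, Submodule.mem_bot, sub_eq_zero] at h1
        exact ⟨x, h1.symm⟩
      obtain ⟨v, hvK, hv0, hvN⟩ := exists_ker_vec N K hKbot
        (by
          intro x hx
          obtain ⟨hx1, hx2⟩ := Submodule.mem_inf.mp hx
          refine Submodule.mem_inf.mpr ⟨?_, ?_⟩
          · rw [LinearMap.mem_ker, Matrix.mulVecLin_apply, Matrix.mulVec_mulVec, ← hNR,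
              ← Matrix.mulVec_mulVec]
            rw [LinearMap.mem_ker, Matrix.mulVecLin_apply] at hx1
            rw [hx1, Matrix.mulVec_zero]
          · rw [hgen] at hx2 ⊢
            rw [Matrix.mulVec_mulVec, hNkN n, ← Matrix.mulVec_mulVec, hx2,
              Matrix.mulVec_zero])
        (fun x hx => (hgen x).mp (Submodule.mem_inf.mp hx).2)
      have hRv : R.mulVec v = 0 := by
        have h3 := (Submodule.mem_inf.mp hvK).1
        rwa [LinearMap.mem_ker, Matrix.mulVecLin_apply] at h3
      have hMv : M.mulVec v = lam₁ • v := by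
        have := hNv v
        rw [hN, Matrix.sub_mulVec, Matrix.smul_mulVec, Matrix.one_mulVec,
          sub_eq_zero] at hvN
        exact hvN
      refine isRoot_charpoly_of_eigen _ _ v hv0 ?_
      rw [Matrix.add_mulVec, hMv, Matrix.smul_mulVec, hRv, smul_zero, add_zero]
    · -- eigenvector of M for μ; show R v = 0
      have hev : Module.End.HasEigenvalue M.mulVecLin μ := (hs μ).mpr hμ
      obtain ⟨v, hv⟩ := hev.exists_hasEigenvector
      have hv0 : v ≠ 0 := hv.2
      have hMv : M.mulVec v = μ • v := by
        have h4 := hv.apply_eq_smul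
        rwa [Matrix.mulVecLin_apply] at h4
      have hNvv : N.mulVec v = (μ - lam₁) • v := hNv v μ hMv
      have hRv : R.mulVec v = 0 := by
        have hmem : R.mulVec v ∈ genE n M lam₁ :=
          hrange.le ⟨v, by rw [Matrix.mulVecLin_apply]⟩
        rw [hgen] at hmem
        have hcom : (N ^ n).mulVec (R.mulVec v) = (μ - lam₁) ^ n • R.mulVec v := by
          rw [Matrix.mulVec_mulVec, hNnR, ← Matrix.mulVec_mulVec,
            hpow_smul v (μ - lam₁) hNvv n, Matrix.mulVec_smul]
        rw [hmem] at hcom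
        have hne : (μ - lam₁) ^ n ≠ 0 := pow_ne_zero _ (sub_ne_zero.mpr hμl)
        exact (smul_eq_zero.mp hcom.symm).resolve_left hne
      refine isRoot_charpoly_of_eigen _ _ v hv0 ?_
      rw [Matrix.add_mulVec, hMv, Matrix.smul_mulVec, hRv, smul_zero, add_zero]
  -- Step 2: lam₁ + α is a root
  have hroot2 : (Matrix.charpoly (M + α • R)).IsRoot (lam₁ + α) := by
    set W : Submodule ℂ (Fin n → ℂ) := LinearMap.range R.mulVecLin with hW
    have hWbot : W ≠ ⊥ := by
      intro hbot
      apply hR0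
      ext i j
      have : R.mulVec (Pi.single j 1) = 0 := by
        have hm : R.mulVec (Pi.single j 1) ∈ W := ⟨Pi.single j 1, by rw [Matrix.mulVecLin_apply]⟩
        rwa [hbot, Submodule.mem_bot] at hm
      have := congrFun this i
      rwa [Matrix.mulVec_single_one] at this
    obtain ⟨v, hvW, hv0, hvN⟩ := exists_ker_vec N W hWbot
      (by
        rintro x ⟨u, hu⟩
        refine ⟨N.mulVec u, ?_⟩
        rw [Matrix.mulVecLin_apply] at hu ⊢
        rw [Matrix.mulVec_mulVec, ← hNR, ← Matrix.mulVec_mulVec, hu])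
      (fun x hx => (hgen x).mp (hrange.le hx))
    have hRv : R.mulVec v = v := by
      obtain ⟨u, hu⟩ := hvW
      rw [Matrix.mulVecLin_apply] at hu
      rw [← hu, Matrix.mulVec_mulVec, hidem]
    have hMv : M.mulVec v = lam₁ • v := by
      rw [hN, Matrix.sub_mulVec, Matrix.smul_mulVec, Matrix.one_mulVec,
        sub_eq_zero] at hvN
      exact hvN
    refine isRoot_charpoly_of_eigen _ _ v hv0 ?_
    rw [Matrix.add_mulVec, hMv, Matrix.smul_mulVec, hRv, add_smul]
  -- conclude
  have hne : Matrix.charpoly (M + α • R) ≠ 0 := (Matrix.charpoly_monic _).ne_zero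
  have hsub : insert (lam₁ + α) s ⊆ (Matrix.charpoly (M + α • R)).roots.toFinset := by
    intro μ hμ
    rw [Multiset.mem_toFinset, Polynomial.mem_roots hne]
    rcases Finset.mem_insert.mp hμ with h | h
    · exact h ▸ hroot2
    · exact hroot1 μ h
  calc s.card + 1 = (insert (lam₁ + α) s).card := (Finset.card_insert_of_notMem hα).symm
    _ ≤ _ := Finset.card_le_card hsub
end

section
/- Let V be a finite-dimensional complex vector space, A ⊆ End(V) a set of endomorphisms, M ∈ A, λ an eigenvalue of M with one-dimensional eigenspace ℂv, E the generalized eigenspace of M for λ with dim E ≥ 2, and P the projection onto E along the sum of the other generalized eigenspaces. If v satisfies PNv ∈ ℂv for all N ∈ A, then Av = span{Nv : N ∈ A} is not equal to V, provided A is a unital subalgebra. -/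
/-- Final step of the reducibility construction: if λ is an eigenvalue of
M ∈ A with one-dimensional eigenspace ℂv, E is the generalized eigenspace of
M for λ with dim E ≥ 2, P ∈ A is the projection onto E along the sum of the
other generalized eigenspaces, and PNv ∈ ℂv for all N ∈ A, then Av ≠ V. -/
theorem stmt17 (V : Type*) [AddCommGroup V] [Module ℂ V]
    [FiniteDimensional ℂ V]
    (A : Subalgebra ℂ (Module.End ℂ V)) (M : Module.End ℂ V) (hM : M ∈ A)
    (lam : ℂ) (v : V) (hv : v ≠ 0)
    (heig : Module.End.eigenspace M lam = Submodule.span ℂ {v})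
    (hE : 2 ≤ Module.finrank ℂ
        (LinearMap.ker ((M - lam • 1) ^ Module.finrank ℂ V)))
    (P : Module.End ℂ V) (hPA : P ∈ A)
    (hP1 : ∀ x ∈ LinearMap.ker ((M - lam • 1) ^ Module.finrank ℂ V), P x = x)
    (hP2 : ∀ x ∈ ⨆ μ ≠ lam,
        LinearMap.ker ((M - μ • 1) ^ Module.finrank ℂ V), P x = 0)
    (hK : ∀ N ∈ A, ∃ c : ℂ, P (N v) = c • v) :
    ¬ (∀ u : V, ∃ N ∈ A, N v = u) := by
  intro h
  set E := LinearMap.ker ((M - lam • 1) ^ Module.finrank ℂ V) with hEdef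
  have hnot : ¬ (E ≤ Submodule.span ℂ {v}) := by
    intro hle
    have h1 : Module.finrank ℂ E ≤ Module.finrank ℂ (Submodule.span ℂ {v}) :=
      Submodule.finrank_mono hle
    rw [finrank_span_singleton hv] at h1
    omega
  obtain ⟨w, hwE, hwv⟩ := Set.not_subset.mp hnot
  obtain ⟨N, hNA, hNv⟩ := h w
  obtain ⟨c, hc⟩ := hK N hNA
  rw [hNv, hP1 w hwE] at hc
  exact hwv (hc ▸ Submodule.smul_mem _ c (Submodule.mem_span_singleton_self v))
end
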